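/- The space c₀ of real sequences converging to 0, equipped with the supremum norm, is alternatively octahedral. -/

import Mathlib

open scoped ZeroAtInfty

/-- A Banach space `Z` is alternatively octahedral. -/
def AlternativelyOctahedral (Z : Type*) [NormedAddCommGroup Z] : Prop :=
  ∀ (n : ℕ) (x : Fin n → Z), (∀ i, ‖x i‖ = 1) →
    ∀ ε > (0 : ℝ), ∃ y : Z, ‖y‖ = 1 ∧ ∀ i, 2 - ε ≤ max ‖x i + y‖ ‖x i - y‖

/-!
Given unit vectors `x₁, …, xₙ` of `c₀`, choose for each `i` a coordinate `kᵢ` with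
`|xᵢ(kᵢ)| > 1 - ε`, and let `y` be the indicator of `{k₁, …, kₙ}` plus one more point (so that
`y ≠ 0` also when `n = 0`). Then `‖y‖ = 1`, and at the coordinate `kᵢ` one of `xᵢ ± y` has absolute value
`|xᵢ(kᵢ)| + 1 > 2 - ε`.
-/

theorem max_abs_add_abs_sub {G : Type*} [AddCommGroup G] [LinearOrder G] [IsOrderedAddMonoid G]
    (a b : G) : max |a + b| |a - b| = |a| + |b| := by
  refine le_antisymm (max_le (abs_add_le a b) (abs_sub _ _)) ?_
  rcases le_total 0 a with ha | ha <;> rcases le_total 0 b with hb | hb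
  · rw [abs_of_nonneg ha, abs_of_nonneg hb]
    exact le_max_of_le_left (le_abs_self _)
  · rw [abs_of_nonneg ha, abs_of_nonpos hb, ← sub_eq_add_neg]
    exact le_max_of_le_right (le_abs_self _)
  · rw [abs_of_nonpos ha, abs_of_nonneg hb, neg_add_eq_sub, ← neg_sub]
    exact le_max_of_le_right (neg_le_abs _)
  · rw [abs_of_nonpos ha, abs_of_nonpos hb, ← neg_add]
    exact le_max_of_le_left (neg_le_abs _)

namespace ZeroAtInftyContinuousMap

section Norm

variable {α β : Type*} [TopologicalSpace α] [SeminormedAddCommGroup β]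

theorem norm_apply_le (f : C₀(α, β)) (x : α) : ‖f x‖ ≤ ‖f‖ :=
  norm_toBCF_eq_norm (f := f) ▸ f.toBCF.norm_coe_le_norm x

theorem norm_le_of_forall_le {f : C₀(α, β)} {C : ℝ} (hC : 0 ≤ C) (h : ∀ x, ‖f x‖ ≤ C) :
    ‖f‖ ≤ C :=
  norm_toBCF_eq_norm (f := f) ▸ (BoundedContinuousFunction.norm_le hC).2 h

theorem exists_lt_norm_apply [Nonempty α] {f : C₀(α, β)} {r : ℝ} (hr : r < ‖f‖) :
    ∃ x, r < ‖f x‖ := by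
  by_contra! h
  have hr₀ : 0 ≤ r := (norm_nonneg _).trans (h (Classical.arbitrary α))
  exact hr.not_ge (norm_le_of_forall_le hr₀ h)

end Norm

section Indicator

variable {α β : Type*} [TopologicalSpace α] [DiscreteTopology α]

noncomputable def finsetIndicator [TopologicalSpace β] [Zero β] (S : Finset α) (c : β) :
    C₀(α, β) where
  toFun := (S : Set α).indicator fun _ ↦ c
  continuous_toFun := continuous_of_discreteTopology
  zero_at_infty' := HasCompactSupport.is_zero_at_infty <|
    .intro S.finite_toSet.isCompact fun _ hx ↦ Set.indicator_of_notMem hx _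

theorem coe_finsetIndicator [TopologicalSpace β] [Zero β] (S : Finset α) (c : β) :
    ⇑(finsetIndicator S c) = (S : Set α).indicator fun _ ↦ c :=
  rfl

theorem finsetIndicator_apply_of_mem [TopologicalSpace β] [Zero β] {S : Finset α} (c : β)
    {x : α} (hx : x ∈ S) : finsetIndicator S c x = c :=
  coe_finsetIndicator S c ▸ Set.indicator_of_mem (s := (S : Set α)) hx _

theorem norm_finsetIndicator [SeminormedAddCommGroup β] {S : Finset α} (hS : S.Nonempty)
    (c : β) : ‖finsetIndicator S c‖ = ‖c‖ := by
  refine le_antisymm (norm_le_of_forall_le (norm_nonneg c) fun x ↦ ?_) ?_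
  · exact coe_finsetIndicator S c ▸ norm_indicator_le_norm_self _ x
  · obtain ⟨x, hx⟩ := hS
    simpa only [finsetIndicator_apply_of_mem c hx] using norm_apply_le (finsetIndicator S c) x

end Indicator

end ZeroAtInftyContinuousMap

open ZeroAtInftyContinuousMap in
theorem alternativelyOctahedral_zeroAtInfty (α : Type*) [TopologicalSpace α] [DiscreteTopology α]
    [Nonempty α] : AlternativelyOctahedral C₀(α, ℝ) := by
  classical
  intro n x hx ε hε
  have hk : ∀ i, ∃ k, 1 - ε < ‖x i k‖ := fun i ↦ exists_lt_norm_apply (by linarith [hx i])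
  choose k hk using hk
  let S := insert (Classical.arbitrary α) (Finset.univ.image k)
  have hkS : ∀ i, k i ∈ S := fun i ↦ Finset.mem_insert_of_mem (Finset.mem_image_of_mem k (Finset.mem_univ i))
  set y := finsetIndicator S (1 : ℝ)
  refine ⟨y, by rw [norm_finsetIndicator (Finset.insert_nonempty _ _), norm_one], fun i ↦ ?_⟩
  have hy : y (k i) = 1 := finsetIndicator_apply_of_mem 1 (hkS i)
  calc 2 - ε ≤ ‖x i (k i)‖ + ‖(1 : ℝ)‖ := by linarith [hk i, norm_one (α := ℝ)]
    _ = max ‖x i (k i) + 1‖ ‖x i (k i) - 1‖ := by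
      simp only [Real.norm_eq_abs, max_abs_add_abs_sub]
    _ ≤ max ‖x i + y‖ ‖x i - y‖ := by
      rw [← hy]
      exact max_le_max (norm_apply_le (x i + y) (k i)) (norm_apply_le (x i - y) (k i))

/-- `c₀`, the space of real sequences converging to `0` with the sup norm, is
alternatively octahedral. -/
theorem c0_alternativelyOctahedral : AlternativelyOctahedral C₀(ℕ, ℝ) :=
  alternativelyOctahedral_zeroAtInfty ℕ
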